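/- arXiv:1407.3838 — 6 statements merged into one kernel-verified Lean document; each statement's English description precedes it below -/
import Mathlib

section
/- For every x > 0 there exists exactly one real number y ≠ x lying on the tangent line to the graph of the hill function at (x, h(x)), i.e. satisfying h(y) = h(x) + h′(x)·(y − x); moreover this unique y is negative. -/
/-- The hill function `h(x) = arccos(tanh x)`. -/
noncomputable def hill (x : ℝ) : ℝ := Real.arccos (Real.tanh x)

/-- The derivative of the hill function: `h'(x) = -1/cosh x`. -/
noncomputable def hill' (x : ℝ) : ℝ := -1 / Real.cosh x

/-!
The gap `g(y) = h(y) - (h(x) + h'(x)(y - x))` between the graph and the tangent line at `x > 0`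
has derivative `h'(y) - h'(x)`, whose sign is that of `|y| - |x|` because `h' = -1/cosh`.
So `g` increases on `(-∞, -x]`, decreases on `[-x, x]` and increases on `[x, ∞)`. As `g(x) = 0`,
`g` is positive on `[-x, ∞) \ {x}`, while `g(y) → -∞` as `y → -∞` since `h` is bounded and the
tangent has negative slope; hence `g` has exactly one zero besides `x`, and it lies below `-x`.
-/

open Real Set

namespace Real

theorem hasDerivAt_tanh (x : ℝ) : HasDerivAt tanh (1 / cosh x ^ 2) x := by
  have hquot := (hasDerivAt_sinh x).div (hasDerivAt_cosh x) (cosh_pos x).ne'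
  rw [show tanh = fun y => sinh y / cosh y from funext tanh_eq_sinh_div_cosh]
  refine hquot.congr_deriv ?_
  rw [← sq, ← sq, cosh_sq_sub_sinh_sq]

theorem sqrt_one_sub_tanh_sq (x : ℝ) : √(1 - tanh x ^ 2) = 1 / cosh x := by
  have hcosh := cosh_pos x
  have h : 1 - tanh x ^ 2 = (1 / cosh x) ^ 2 := by
    rw [tanh_eq_sinh_div_cosh]
    field_simp
    linear_combination cosh_sq_sub_sinh_sq x
  rw [h, sqrt_sq (by positivity)]

end Real

theorem hasDerivAt_hill (x : ℝ) : HasDerivAt hill (hill' x) x := by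
  have h := (hasDerivAt_arccos (neg_one_lt_tanh x).ne' (tanh_lt_one x).ne).comp x
    (hasDerivAt_tanh x)
  refine h.congr_deriv ?_
  rw [sqrt_one_sub_tanh_sq, hill']
  field_simp

theorem hill'_lt_hill'_iff {x y : ℝ} : hill' x < hill' y ↔ |x| < |y| := by
  rw [hill', hill', neg_div, neg_div, neg_lt_neg_iff,
    one_div_lt_one_div (cosh_pos y) (cosh_pos x), cosh_lt_cosh]

theorem hill_nonneg (x : ℝ) : 0 ≤ hill x := arccos_nonneg _

theorem hill_le_pi (x : ℝ) : hill x ≤ π := arccos_le_pi _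

noncomputable def hillTangentGap (x y : ℝ) : ℝ := hill y - (hill x + hill' x * (y - x))

namespace hillTangentGap

variable {x y : ℝ}

theorem eq_zero_iff : hillTangentGap x y = 0 ↔ hill y = hill x + hill' x * (y - x) :=
  sub_eq_zero

@[simp]
theorem self (x : ℝ) : hillTangentGap x x = 0 := by simp [hillTangentGap]

theorem hasDerivAt (x y : ℝ) : HasDerivAt (hillTangentGap x) (hill' y - hill' x) y := by
  have hline : HasDerivAt (fun y => hill x + hill' x * (y - x)) (hill' x) y := by
    simpa using (((hasDerivAt_id y).sub_const x).const_mul (hill' x)).const_add (hill x)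
  exact (hasDerivAt_hill y).sub hline

theorem continuous (x : ℝ) : Continuous (hillTangentGap x) :=
  continuous_iff_continuousAt.mpr fun y => (hasDerivAt x y).continuousAt

theorem strictMonoOn_Iic (hx : 0 ≤ x) : StrictMonoOn (hillTangentGap x) (Iic (-x)) := by
  refine strictMonoOn_of_deriv_pos (convex_Iic _) (continuous x).continuousOn fun y hy => ?_
  rw [interior_Iic, mem_Iio] at hy
  rw [(hasDerivAt x y).deriv, sub_pos, hill'_lt_hill'_iff, abs_of_nonneg hx,
    abs_of_neg (by linarith)]
  linarith

theorem strictAntiOn_Icc (x : ℝ) : StrictAntiOn (hillTangentGap x) (Icc (-x) x) := by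
  refine strictAntiOn_of_deriv_neg (convex_Icc _ _) (continuous x).continuousOn fun y hy => ?_
  rw [interior_Icc] at hy
  rw [(hasDerivAt x y).deriv, sub_neg, hill'_lt_hill'_iff]
  exact (abs_lt.mpr hy).trans_le (le_abs_self x)

theorem strictMonoOn_Ici (hx : 0 ≤ x) : StrictMonoOn (hillTangentGap x) (Ici x) := by
  refine strictMonoOn_of_deriv_pos (convex_Ici _) (continuous x).continuousOn fun y hy => ?_
  rw [interior_Ici, mem_Ioi] at hy
  rw [(hasDerivAt x y).deriv, sub_pos, hill'_lt_hill'_iff, abs_of_nonneg hx,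
    abs_of_nonneg (by linarith)]
  exact hy

theorem pos_of_neg_le (hx : 0 ≤ x) (hy : -x ≤ y) (hyx : y ≠ x) : 0 < hillTangentGap x y := by
  rcases hyx.lt_or_gt with hlt | hgt
  · simpa using strictAntiOn_Icc x ⟨hy, hlt.le⟩ ⟨hy.trans hlt.le, le_rfl⟩ hlt
  · simpa using strictMonoOn_Ici hx self_mem_Ici hgt.le hgt

/-- `hill` takes values in `[0, π]`, while the tangent line rises by more than `π` from `x` to
`-x - π cosh x`. -/
theorem neg_sub_pi_mul_cosh_lt_zero (hx : 0 < x) : hillTangentGap x (-x - π * cosh x) < 0 := by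
  have hcosh := cosh_pos x
  have hslope : hill' x * (-x - π * cosh x - x) = 2 * x / cosh x + π := by
    rw [hill']
    field_simp
    ring
  rw [hillTangentGap, hslope]
  linarith [hill_le_pi (-x - π * cosh x), hill_nonneg x, div_pos (mul_pos two_pos hx) hcosh]

theorem exists_eq_zero_lt_neg (hx : 0 < x) : ∃ y < -x, hillTangentGap x y = 0 := by
  have hfar : -x - π * cosh x < -x := by nlinarith [cosh_pos x, pi_pos]
  obtain ⟨y, hy, hzero⟩ := intermediate_value_Ioo hfar.le (continuous x).continuousOn
    ⟨neg_sub_pi_mul_cosh_lt_zero hx, pos_of_neg_le hx.le le_rfl (by linarith)⟩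
  exact ⟨y, hy.2, hzero⟩

end hillTangentGap

open hillTangentGap in
/-- For every `x > 0`, the tangent line to the graph of the hill function at `(x, h x)`
meets the graph in exactly one other point `(y, h y)` with `y ≠ x`, and this
unique `y` is negative. -/
theorem hill_tangent_second_intersection {x : ℝ} (hx : 0 < x) :
    ∃ y : ℝ, (y ≠ x ∧ hill y = hill x + hill' x * (y - x)) ∧ y < 0 ∧
      ∀ z : ℝ, z ≠ x → hill z = hill x + hill' x * (z - x) → z = y := by
  obtain ⟨y, hy, hzero⟩ := exists_eq_zero_lt_neg hx
  refine ⟨y, ⟨by linarith, eq_zero_iff.mp hzero⟩, by linarith, fun z hzx hz => ?_⟩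
  by_cases hz_left : z < -x
  · exact (strictMonoOn_Iic hx.le).injOn hz_left.le hy.le (by rw [eq_zero_iff.mpr hz, hzero])
  · exact absurd (eq_zero_iff.mpr hz) (pos_of_neg_le hx.le (not_lt.mp hz_left) hzx).ne'
end

section
/- Suppose 0 < x₁ < x₂, and for i = 1, 2 let yᵢ be the unique real number with yᵢ ≠ xᵢ and h(yᵢ) = h(xᵢ) + h′(xᵢ)·(yᵢ − xᵢ). Then h(y₁) − h(x₁) < h(y₂) − h(x₂); that is, the height-difference function B(x) = h(f(x)) − h(x) between the two intersection points of the tangent line at x with the graph of h is strictly increasing on (0, ∞). -/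
open Real Set

theorem Real.hasDerivAt_tanh_s5 (x : ℝ) : HasDerivAt tanh (1 / cosh x ^ 2) x := by
  have h := (hasDerivAt_sinh x).div (hasDerivAt_cosh x) (cosh_pos x).ne'
  rwa [← sq, ← sq, cosh_sq_sub_sinh_sq, show sinh / cosh = tanh from
    funext fun y ↦ (tanh_eq_sinh_div_cosh y).symm] at h

theorem Real.sqrt_one_sub_tanh_sq_s5 (x : ℝ) : √(1 - tanh x ^ 2) = 1 / cosh x := by
  rw [tanh_eq_sinh_div_cosh, div_pow, one_sub_div (by positivity), cosh_sq_sub_sinh_sq,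
    sqrt_div' _ (by positivity), sqrt_one, sqrt_sq (cosh_pos x).le]

theorem deriv_hill : deriv hill = hill' := funext fun x ↦ (hasDerivAt_hill x).deriv

theorem differentiable_hill : Differentiable ℝ hill := fun x ↦ (hasDerivAt_hill x).differentiableAt

theorem hill'_lt_zero (x : ℝ) : hill' x < 0 := div_neg_of_neg_of_pos (by norm_num) (cosh_pos x)

theorem strictAnti_hill : StrictAnti hill :=
  strictAnti_of_deriv_neg fun x ↦ deriv_hill ▸ hill'_lt_zero x

theorem hill'_lt_hill'_iff_s5 {a b : ℝ} : hill' a < hill' b ↔ |a| < |b| := by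
  rw [hill', hill', neg_div, neg_div, neg_lt_neg_iff, one_div_lt_one_div (cosh_pos _) (cosh_pos _),
    cosh_lt_cosh]

theorem hill'_mul_sub_lt_hill_sub {x a b : ℝ} (hab : a < b) (h : ∀ c ∈ Ioo a b, |x| < |c|) :
    hill' x * (b - a) < hill b - hill a :=
  (convex_Icc a b).mul_sub_lt_image_sub_of_lt_deriv differentiable_hill.continuous.continuousOn
    differentiable_hill.differentiableOn
    (fun c hc ↦ deriv_hill ▸ hill'_lt_hill'_iff_s5.2 (h c (by rwa [interior_Icc] at hc)))
    a (left_mem_Icc.2 hab.le) b (right_mem_Icc.2 hab.le) hab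

theorem hill_sub_lt_hill'_mul_sub {x a b : ℝ} (hab : a < b) (h : ∀ c ∈ Ioo a b, |c| < |x|) :
    hill b - hill a < hill' x * (b - a) :=
  (convex_Icc a b).image_sub_lt_mul_sub_of_deriv_lt differentiable_hill.continuous.continuousOn
    differentiable_hill.differentiableOn
    (fun c hc ↦ deriv_hill ▸ hill'_lt_hill'_iff_s5.2 (h c (by rwa [interior_Icc] at hc)))
    a (left_mem_Icc.2 hab.le) b (right_mem_Icc.2 hab.le) hab

theorem lt_neg_of_hill_eq_tangent {x y : ℝ} (hx : 0 < x) (hne : y ≠ x)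
    (hy : hill y = hill x + hill' x * (y - x)) : y < -x := by
  by_contra! hxy
  rcases hne.lt_or_gt with hyx | hxy'
  · have := hill_sub_lt_hill'_mul_sub (x := x) hyx fun c hc ↦ by
      rw [abs_lt, abs_of_pos hx]; exact ⟨by linarith [hc.1], hc.2⟩
    linarith
  · have := hill'_mul_sub_lt_hill_sub (x := x) hxy' fun c hc ↦ by
      rw [abs_of_pos hx, abs_of_pos (hx.trans hc.1)]; exact hc.1
    linarith

/-- If `0 < x₁ < x₂` and `yᵢ` is the second intersection of the tangent line at `xᵢ`
with the graph of the hill function, then `h(y₁) - h(x₁) < h(y₂) - h(x₂)`: the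
height-difference function `B(x) = h(f(x)) - h(x)` is strictly increasing on `(0, ∞)`. -/
theorem hill_tangent_height_difference_monotone {x₁ x₂ y₁ y₂ : ℝ}
    (hx₁ : 0 < x₁) (hx₁₂ : x₁ < x₂)
    (hy₁ne : y₁ ≠ x₁) (hy₁ : hill y₁ = hill x₁ + hill' x₁ * (y₁ - x₁))
    (hy₂ne : y₂ ≠ x₂) (hy₂ : hill y₂ = hill x₂ + hill' x₂ * (y₂ - x₂)) :
    hill y₁ - hill x₁ < hill y₂ - hill x₂ := by
  have hx₂ : 0 < x₂ := hx₁.trans hx₁₂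
  have hy₁x₁ : y₁ < -x₁ := lt_neg_of_hill_eq_tangent hx₁ hy₁ne hy₁
  have hy₂x₂ : y₂ < -x₂ := lt_neg_of_hill_eq_tangent hx₂ hy₂ne hy₂
  have hhx : hill x₂ < hill x₁ := strictAnti_hill hx₁₂
  rcases le_or_gt y₂ y₁ with hy | hy
  · linarith [strictAnti_hill.antitone hy]
  exfalso
  have hgap : hill x₂ - hill x₁ < hill' x₂ * (x₂ - x₁) :=
    hill_sub_lt_hill'_mul_sub hx₁₂ fun c hc ↦ by
      rw [abs_of_pos (hx₁.trans hc.1), abs_of_pos hx₂]; exact hc.2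
  have hrise : hill' x₂ * (y₂ - y₁) < hill y₂ - hill y₁ :=
    hill'_mul_sub_lt_hill_sub hy fun c hc ↦ by
      rw [abs_of_pos hx₂, abs_of_neg (by linarith [hc.2])]; linarith [hc.2]
  have hslope : 0 < (hill' x₂ - hill' x₁) * (x₁ - y₁) :=
    mul_pos (sub_pos.2 (hill'_lt_hill'_iff_s5.2 (by rwa [abs_of_pos hx₁, abs_of_pos hx₂])))
      (by linarith)
  linarith
end

section
/- Let c be the unique real solution of h(c − 1) = h(c) − h′(c). Then h(c − 1) − h(c) < 2·arcsin(tanh(1/2)); that is, the embeddedness threshold G(1) is strictly below the conjectured optimal bound 2·arcsin(tanh(1/2)) ≈ 0.96076. -/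
/-!
The gap `h(x - L) - h(x)` has derivative `1/cosh x - 1/cosh (x - L)`, which is positive exactly
when `|x| < |x - L|`, i.e. when `x < L/2`. So the gap has a strict maximum at `x = L/2`, where the
oddness of `arcsin ∘ tanh = π/2 - h` makes it `2 arcsin (tanh (L/2))`. For `L = 1` the root `c`
cannot be `1/2`: there the defining equation would make the gap `1/cosh (1/2)`, whereas
`2 arcsin (tanh (1/2)) > 2 tanh (1/2) > 1/cosh (1/2)` because `sinh (1/2) > 1/2`.
-/

open Real Set

namespace Real

theorem tanh_lt_arcsin_tanh {x : ℝ} (hx : 0 < x) : tanh x < arcsin (tanh x) := by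
  have htanh : 0 < tanh x := by
    rw [tanh_eq_sinh_div_cosh]
    exact div_pos (sinh_pos_iff.2 hx) (cosh_pos x)
  have h := sin_lt (arcsin_pos.2 htanh)
  rwa [sin_arcsin (neg_one_lt_tanh x).le (tanh_lt_one x).le] at h

theorem one_div_cosh_lt_two_mul_arcsin_tanh {x : ℝ} (hx : 1 / 2 ≤ x) :
    1 / cosh x < 2 * arcsin (tanh x) := by
  have hx₀ : 0 < x := by linarith
  have hsinh : 1 < 2 * sinh x := by linarith [self_lt_sinh_iff.2 hx₀]
  calc 1 / cosh x < 2 * sinh x / cosh x := div_lt_div_of_pos_right hsinh (cosh_pos x)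
    _ = 2 * tanh x := by rw [tanh_eq_sinh_div_cosh, mul_div_assoc]
    _ < 2 * arcsin (tanh x) := by linarith [tanh_lt_arcsin_tanh hx₀]

end Real

theorem hill_neg_sub_hill (x : ℝ) : hill (-x) - hill x = 2 * arcsin (tanh x) := by
  simp only [hill, tanh_neg, arccos_eq_pi_div_two_sub_arcsin, arcsin_neg]
  ring

noncomputable def hillGap (L x : ℝ) : ℝ := hill (x - L) - hill x

theorem hasDerivAt_hillGap (L x : ℝ) : HasDerivAt (hillGap L) (hill' (x - L) - hill' x) x :=
  ((hasDerivAt_hill (x - L)).comp_sub_const x L).sub (hasDerivAt_hill x)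

theorem continuous_hillGap (L : ℝ) : Continuous (hillGap L) :=
  continuous_iff_continuousAt.2 fun x => (hasDerivAt_hillGap L x).continuousAt

theorem strictMonoOn_hillGap {L : ℝ} (hL : 0 < L) : StrictMonoOn (hillGap L) (Iic (L / 2)) := by
  refine strictMonoOn_of_hasDerivWithinAt_pos (convex_Iic _) (continuous_hillGap L).continuousOn
    (fun x _ => (hasDerivAt_hillGap L x).hasDerivWithinAt) fun x hx => ?_
  rw [interior_Iic, mem_Iio] at hx
  rw [sub_pos, hill'_lt_hill'_iff, ← sq_lt_sq]
  nlinarith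

theorem strictAntiOn_hillGap {L : ℝ} (hL : 0 < L) : StrictAntiOn (hillGap L) (Ici (L / 2)) := by
  refine strictAntiOn_of_hasDerivWithinAt_neg (convex_Ici _) (continuous_hillGap L).continuousOn
    (fun x _ => (hasDerivAt_hillGap L x).hasDerivWithinAt) fun x hx => ?_
  rw [interior_Ici, mem_Ioi] at hx
  rw [sub_neg, hill'_lt_hill'_iff, ← sq_lt_sq]
  nlinarith

theorem hillGap_lt_hillGap_half {L c : ℝ} (hL : 0 < L) (hc : c ≠ L / 2) :
    hillGap L c < hillGap L (L / 2) := by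
  rcases hc.lt_or_gt with h | h
  · exact strictMonoOn_hillGap hL h.le (mem_Iic.2 le_rfl) h
  · exact strictAntiOn_hillGap hL (mem_Ici.2 le_rfl) h.le h

theorem hillGap_half (L : ℝ) : hillGap L (L / 2) = 2 * arcsin (tanh (L / 2)) := by
  rw [hillGap, show L / 2 - L = -(L / 2) by ring]
  exact hill_neg_sub_hill _

/-- If `c` solves `h (c - 1) = h c - h' c`, then
`h (c - 1) - h c < 2 * arcsin (tanh (1/2))`; the threshold `G(1)` lies strictly
below the conjectured optimal bound `2 arcsin (tanh (1/2)) ≈ 0.96076`. -/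
theorem hill_G_one_lt_conjectured_bound {c : ℝ}
    (hc : hill (c - 1) = hill c - 1 * hill' c) :
    hill (c - 1) - hill c < 2 * Real.arcsin (Real.tanh (1 / 2)) := by
  have hc_ne : c ≠ 1 / 2 := by
    rintro rfl
    have hgap : hillGap 1 (1 / 2) = 1 / cosh (1 / 2) := by
      rw [hillGap, hc, hill']
      ring
    exact (one_div_cosh_lt_two_mul_arcsin_tanh le_rfl).ne (hgap.symm.trans (hillGap_half 1))
  calc hill (c - 1) - hill c = hillGap 1 c := rfl
    _ < hillGap 1 (1 / 2) := hillGap_lt_hillGap_half one_pos hc_ne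
    _ = 2 * arcsin (tanh (1 / 2)) := hillGap_half 1
end

section
/- If L > 0 and 2·tanh(L) > L, then the function j(x) = eˣ·sinh(L·e^{−x/2}) is strictly increasing on the interval [0, ∞); in particular j(x) ≥ sinh(L) for all x ≥ 0. -/
/-!
With `g t = 2 sinh t - t cosh t` one computes `j' x = eˣ / 2 * g (L e^{-x/2})`. Now `g 0 = 0`,
`g'' t = -t cosh t < 0` for `t > 0`, and `g L > 0` is the hypothesis `2 tanh L > L`; by strict
concavity `g` is positive on `(0, L)`, which contains `L e^{-x/2}` for every `x > 0`.
-/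

open Real Set

lemma deriv_two_mul_sinh_sub_mul_cosh :
    deriv (fun t : ℝ => 2 * sinh t - t * cosh t) = fun t => cosh t - t * sinh t := by
  funext t
  refine (((hasDerivAt_sinh t).const_mul 2).sub
    ((hasDerivAt_id t).mul (hasDerivAt_cosh t))).deriv.trans ?_
  simp only [id]; ring

lemma deriv_cosh_sub_mul_sinh :
    deriv (fun t : ℝ => cosh t - t * sinh t) = fun t => -(t * cosh t) := by
  funext t
  refine ((hasDerivAt_cosh t).sub ((hasDerivAt_id t).mul (hasDerivAt_sinh t))).deriv.trans ?_
  simp only [id]; ring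

lemma strictConcaveOn_two_mul_sinh_sub_mul_cosh :
    StrictConcaveOn ℝ (Ici 0) (fun t : ℝ => 2 * sinh t - t * cosh t) := by
  refine strictConcaveOn_of_deriv2_neg (convex_Ici 0) (by fun_prop) fun t ht => ?_
  rw [interior_Ici, mem_Ioi] at ht
  simp only [Function.iterate_succ, Function.iterate_zero, Function.comp_apply, id,
    deriv_two_mul_sinh_sub_mul_cosh, deriv_cosh_sub_mul_sinh]
  have := cosh_pos t
  nlinarith

lemma mul_cosh_lt_two_mul_sinh {L u : ℝ} (hL : L * cosh L ≤ 2 * sinh L) (hu : 0 < u)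
    (huL : u < L) : u * cosh u < 2 * sinh u := by
  have h := strictConcaveOn_two_mul_sinh_sub_mul_cosh.lt_on_openSegment self_mem_Ici
    (mem_Ici.2 (hu.trans huL).le) (hu.trans huL).ne
    (by rw [openSegment_eq_Ioo (hu.trans huL)]; exact ⟨hu, huL⟩)
  simp only [sinh_zero, cosh_zero, mul_zero, zero_mul, sub_zero] at h
  rw [min_eq_left (by linarith)] at h
  linarith

lemma mul_cosh_lt_two_mul_sinh_iff {L : ℝ} : L * cosh L < 2 * sinh L ↔ L < 2 * tanh L := by
  rw [tanh_eq_sinh_div_cosh, mul_div_assoc', lt_div_iff₀ (cosh_pos L)]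

lemma hasDerivAt_exp_mul_sinh_mul_exp (L x : ℝ) :
    HasDerivAt (fun x : ℝ => exp x * sinh (L * exp (-x / 2)))
      (exp x / 2 * (2 * sinh (L * exp (-x / 2)) - L * exp (-x / 2) * cosh (L * exp (-x / 2))))
      x := by
  have hu : HasDerivAt (fun x : ℝ => L * exp (-x / 2)) (L * (exp (-x / 2) * (-1 / 2))) x :=
    (((hasDerivAt_id x).neg.div_const 2).exp).const_mul L
  exact ((hasDerivAt_exp x).mul hu.sinh).congr_deriv (by ring)

/-- If `L > 0` and `2 tanh L > L`, then `j(x) = eˣ sinh (L e^{-x/2})` is strictly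
increasing on `[0, ∞)`; in particular `j(x) ≥ sinh L` for all `x ≥ 0`. -/
theorem strictMonoOn_exp_mul_sinh {L : ℝ} (hL : 0 < L) (hL' : L < 2 * Real.tanh L) :
    StrictMonoOn (fun x : ℝ => Real.exp x * Real.sinh (L * Real.exp (-x / 2)))
      (Set.Ici (0 : ℝ)) ∧
    ∀ x : ℝ, 0 ≤ x → Real.sinh L ≤ Real.exp x * Real.sinh (L * Real.exp (-x / 2)) := by
  have hLL : L * cosh L ≤ 2 * sinh L := (mul_cosh_lt_two_mul_sinh_iff.2 hL').le
  have hmono : StrictMonoOn (fun x : ℝ => exp x * sinh (L * exp (-x / 2))) (Ici 0) := by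
    refine strictMonoOn_of_hasDerivWithinAt_pos (convex_Ici 0) (by fun_prop)
      (fun x _ => (hasDerivAt_exp_mul_sinh_mul_exp L x).hasDerivWithinAt) fun x hx => ?_
    rw [interior_Ici, mem_Ioi] at hx
    have hu_lt : L * exp (-x / 2) < L :=
      mul_lt_of_lt_one_right hL (exp_lt_one_iff.2 (by linarith))
    exact mul_pos (by positivity)
      (sub_pos.2 (mul_cosh_lt_two_mul_sinh hLL (by positivity) hu_lt))
  refine ⟨hmono, fun x hx => ?_⟩
  simpa using hmono.monotoneOn self_mem_Ici (mem_Ici.2 hx) hx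
end

section
/- If L > 0 and 2·tanh(L) > L, then for every real x one has arcsinh(e^{−|x|}·sinh(L)) ≤ L·e^{−|x|/2}; equivalently, g(L, x) := max(L·e^{−|x|/2}, arcsinh(e^{−|x|}·sinh(L))) = L·e^{−|x|/2} for all x. -/
/-!
Put `s = e^{-|x|/2} ∈ (0, 1]`. Since `arsinh` is monotone, the claim is `s² sinh L ≤ sinh (s L)`.
The function `f s = sinh (s L) - s² sinh L` vanishes at `0` and `1`, and its derivative
`L cosh (s L) - 2 s sinh L` is convex in `s` and, because `L ≤ 2 tanh L`, nonpositive at `s = 1`.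
If `f s` were below both boundary values, the mean value theorem would give `c < d` in `(0, 1)`
with `f' c < 0 < f' d`, which contradicts convexity of `f'` on `[c, 1]`.
-/

open Real Set

theorem Real.convexOn_cosh : ConvexOn ℝ univ cosh := by
  refine ((convexOn_exp.add (convexOn_exp.comp_linearMap (-LinearMap.id))).smul
    (by norm_num : (0 : ℝ) ≤ 1 / 2)).congr fun x _ => ?_
  simp [cosh_eq]
  ring

theorem min_le_of_convexOn_deriv {f f' : ℝ → ℝ} {a b s : ℝ}
    (hf : ∀ t ∈ Icc a b, HasDerivAt f (f' t) t) (hf' : ConvexOn ℝ (Icc a b) f')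
    (hb : f' b ≤ 0) (hs : s ∈ Icc a b) : min (f a) (f b) ≤ f s := by
  by_contra! hlt
  have hsa : f s < f a := hlt.trans_le (min_le_left _ _)
  have hsb : f s < f b := hlt.trans_le (min_le_right _ _)
  have has : a < s := hs.1.lt_of_ne (by rintro rfl; exact hsa.false)
  have hsb' : s < b := hs.2.lt_of_ne (by rintro rfl; exact hsb.false)
  have hderiv : ∀ t ∈ Ioo a b, HasDerivAt f (f' t) t := fun t ht => hf t (Ioo_subset_Icc_self ht)
  have hcont : ContinuousOn f (Icc a b) := fun t ht => (hf t ht).continuousAt.continuousWithinAt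
  obtain ⟨c, hc, hfc⟩ := exists_hasDerivAt_eq_slope f f' has
    (hcont.mono (Icc_subset_Icc_right hs.2))
    (fun t ht => hderiv t ⟨ht.1, ht.2.trans hsb'⟩)
  obtain ⟨d, hd, hfd⟩ := exists_hasDerivAt_eq_slope f f' hsb'
    (hcont.mono (Icc_subset_Icc_left hs.1))
    (fun t ht => hderiv t ⟨has.trans ht.1, ht.2⟩)
  have hc_neg : f' c < 0 := hfc ▸ div_neg_of_neg_of_pos (by linarith) (by linarith)
  have hd_pos : 0 < f' d := hfd ▸ div_pos (by linarith) (by linarith)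
  have hd_le : f' d ≤ max (f' c) (f' b) :=
    hf'.le_max_of_mem_Icc ⟨hc.1.le, (hc.2.trans hsb').le⟩ ⟨has.le.trans hsb'.le, le_rfl⟩
      ⟨(hc.2.trans hd.1).le, hd.2.le⟩
  exact (max_lt (hc_neg.trans hd_pos) (hb.trans_lt hd_pos)).not_ge hd_le

theorem Real.sq_mul_sinh_le_sinh_mul {L s : ℝ} (hL : 0 ≤ L) (hLc : L * cosh L ≤ 2 * sinh L)
    (hs : s ∈ Icc 0 1) : s ^ 2 * sinh L ≤ sinh (s * L) := by
  have hderiv : ∀ t : ℝ, HasDerivAt (fun t => sinh (t * L) - t ^ 2 * sinh L)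
      (L * cosh (t * L) - 2 * t * sinh L) t := fun t =>
    ((hasDerivAt_mul_const L).sinh.sub ((hasDerivAt_pow 2 t).mul_const (sinh L))).congr_deriv
      (by push_cast; ring)
  have hconv : ConvexOn ℝ univ fun t => L * cosh (t * L) - 2 * t * sinh L :=
    ((convexOn_cosh.comp_linearMap (LinearMap.mulRight ℝ L)).smul hL).sub
      ((LinearMap.mulRight ℝ (2 * sinh L)).concaveOn convex_univ) |>.congr fun t _ => by
        simp [mul_comm]
  simpa using min_le_of_convexOn_deriv (fun t _ => hderiv t)
    (hconv.subset (subset_univ _) (convex_Icc 0 1)) (by simpa using hLc) hs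

theorem Real.arsinh_sq_mul_sinh_le {L s : ℝ} (hL : 0 ≤ L) (hLc : L * cosh L ≤ 2 * sinh L)
    (hs : s ∈ Icc 0 1) : arsinh (s ^ 2 * sinh L) ≤ L * s := by
  rw [mul_comm L, ← arsinh_sinh (s * L), arsinh_le_arsinh]
  exact sq_mul_sinh_le_sinh_mul hL hLc hs

/-- If `L > 0` and `2 tanh L > L`, then for all real `x`,
`arcsinh (e^{-|x|} sinh L) ≤ L e^{-|x|/2}`; equivalently
`g(L, x) = max (L e^{-|x|/2}) (arcsinh (e^{-|x|} sinh L)) = L e^{-|x|/2}`. -/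
theorem g_eq_of_two_tanh_gt {L : ℝ} (hL : 0 < L) (hL' : L < 2 * Real.tanh L) :
    ∀ x : ℝ,
      Real.arsinh (Real.exp (-|x|) * Real.sinh L) ≤ L * Real.exp (-|x| / 2) ∧
      max (L * Real.exp (-|x| / 2)) (Real.arsinh (Real.exp (-|x|) * Real.sinh L))
        = L * Real.exp (-|x| / 2) := by
  intro x
  have hLc : L * cosh L ≤ 2 * sinh L := by
    rw [tanh_eq_sinh_div_cosh, mul_div_assoc', lt_div_iff₀ (cosh_pos L)] at hL'
    exact hL'.le
  have hs : exp (-|x| / 2) ∈ Icc 0 1 :=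
    ⟨(exp_pos _).le, exp_le_one_iff.2 (by linarith [abs_nonneg x])⟩
  have hsq : exp (-|x| / 2) ^ 2 = exp (-|x|) := by rw [← exp_nat_mul]; ring_nf
  have hle := arsinh_sq_mul_sinh_le hL.le hLc hs
  rw [hsq] at hle
  exact ⟨hle, max_eq_left hle⟩
end

section
/- For every L > 0 and every real x, setting g := max(L·e^{−|x|/2}, arcsinh(e^{−|x|}·sinh(L))), one has min(g·e^{|x|/2}, arcsinh(e^{|x|}·sinh(g))) = L; that is, f(g(L, x), x) = L, where f(A, x) = min(A·e^{|x|/2}, arcsinh(e^{|x|}·sinh(A))). -/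
/-!
Both `A ↦ A e^{|x|/2}` and `A ↦ arsinh (e^{|x|} sinh A)` are monotone, and `g` is the larger of
their inverses evaluated at `L`. Whichever inverse attains the maximum is sent back to `L` by its
own map, while the other map, by monotonicity, sends it to at least `L`; so the minimum is `L`.
-/

open Real

theorem min_apply_max_eq_of_monotone {α β : Type*} [LinearOrder α] [LinearOrder β]
    {f g : α → β} {f' g' : β → α} (hf : Monotone f) (hg : Monotone g) {y : β}
    (hfy : f (f' y) = y) (hgy : g (g' y) = y) :
    min (f (max (f' y) (g' y))) (g (max (f' y) (g' y))) = y := by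
  rcases le_total (f' y) (g' y) with h | h
  · rw [max_eq_right h, hgy]
    exact min_eq_right (hfy.symm.trans_le (hf h))
  · rw [max_eq_left h, hfy]
    exact min_eq_left (hgy.symm.trans_le (hg h))

theorem monotone_arsinh_mul_sinh {c : ℝ} (hc : 0 ≤ c) : Monotone fun A => arsinh (c * sinh A) :=
  arsinh_strictMono.monotone.comp fun _ _ h =>
    mul_le_mul_of_nonneg_left (sinh_strictMono.monotone h) hc

theorem arsinh_exp_mul_sinh_arsinh_exp_neg_mul_sinh (t L : ℝ) :
    arsinh (exp t * sinh (arsinh (exp (-t) * sinh L))) = L := by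
  rw [sinh_arsinh, ← mul_assoc, ← exp_add, add_neg_cancel, exp_zero, one_mul, arsinh_sinh]

theorem mul_exp_neg_half_mul_exp_half (t L : ℝ) : L * exp (-t / 2) * exp (t / 2) = L := by
  rw [mul_assoc, ← exp_add, neg_div, neg_add_cancel, exp_zero, mul_one]

theorem f_g_eq_general {L : ℝ} (x : ℝ) :
    min ((max (L * Real.exp (-|x| / 2))
            (Real.arsinh (Real.exp (-|x|) * Real.sinh L))) * Real.exp (|x| / 2))
        (Real.arsinh (Real.exp |x| *
          Real.sinh (max (L * Real.exp (-|x| / 2))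
            (Real.arsinh (Real.exp (-|x|) * Real.sinh L)))))
      = L :=
  min_apply_max_eq_of_monotone (f := fun A => A * exp (|x| / 2))
    (f' := fun y => y * exp (-|x| / 2)) (g' := fun y => arsinh (exp (-|x|) * sinh y))
    (fun _ _ h => mul_le_mul_of_nonneg_right h (exp_pos _).le)
    (monotone_arsinh_mul_sinh (exp_pos _).le)
    (mul_exp_neg_half_mul_exp_half |x| L) (arsinh_exp_mul_sinh_arsinh_exp_neg_mul_sinh |x| L)

/-- For every `L > 0` and every real `x`, with
`g = max (L e^{-|x|/2}) (arcsinh (e^{-|x|} sinh L))`, one has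
`min (g e^{|x|/2}) (arcsinh (e^{|x|} sinh g)) = L`; that is, `f (g (L, x), x) = L`
where `f(A, x) = min (A e^{|x|/2}) (arcsinh (e^{|x|} sinh A))`. -/
theorem f_g_eq {L : ℝ} (hL : 0 < L) (x : ℝ) :
    min ((max (L * Real.exp (-|x| / 2))
            (Real.arsinh (Real.exp (-|x|) * Real.sinh L))) * Real.exp (|x| / 2))
        (Real.arsinh (Real.exp |x| *
          Real.sinh (max (L * Real.exp (-|x| / 2))
            (Real.arsinh (Real.exp (-|x|) * Real.sinh L)))))
      = L :=
  f_g_eq_general x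
end
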